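/- Let A ∈ ℝ^{n×n} be a symmetric matrix and let λ ≥ ‖A‖_op, where ‖·‖_op denotes the spectral (operator) norm. Then the matrix 𝟙𝟙ᵀ/n is a maximizer of SDP-λ: every matrix X ∈ ℝ^{n×n} that is positive semidefinite, entrywise nonnegative and satisfies X𝟙 = 𝟙 obeys trace(AX) − λ·trace(X) ≤ trace(A·𝟙𝟙ᵀ/n) − λ. -/

import Mathlib

open Matrix BigOperators

noncomputable section

/-- The spectral (ℓ2 → ℓ2 operator) norm of a real square matrix. -/
def opNorm {n : ℕ} (M : Matrix (Fin n) (Fin n) ℝ) : ℝ :=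
  ‖Matrix.toEuclideanCLM (𝕜 := ℝ) M‖

/-
If `J` is the all-`1/n` matrix, then `J` is a rank-one projection and every psd `X` with unit
row sums fixes it: `XJ = JX = J`. Hence `X - J = (1 - J) X (1 - J)` is again psd, so the quadratic
form bound `v ⬝ᵥ A v ≤ ‖A‖ ‖v‖²`, summed over a Gram factorisation of `X - J`, gives
`tr(A(X - J)) ≤ ‖A‖ tr(X - J) ≤ λ tr(X - J)`. Since `tr J = 1`, this is the claim.
-/

namespace Matrix

section ConstMatrix

variable {ι : Type*} [Fintype ι]

theorem mul_of_const_of_sum_row_eq_one {X : Matrix ι ι ℝ} (hrow : ∀ i, ∑ j, X i j = 1) (c : ℝ) :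
    X * of (fun _ _ => c) = of fun _ _ => c := by
  ext i j
  simp only [mul_apply, of_apply, ← Finset.sum_mul, hrow, one_mul]

theorem of_const_mul_of_sum_col_eq_one {X : Matrix ι ι ℝ} (hcol : ∀ j, ∑ i, X i j = 1) (c : ℝ) :
    of (fun _ _ => c) * X = of fun _ _ => c := by
  ext i j
  simp only [mul_apply, of_apply, ← Finset.mul_sum, hcol, mul_one]

theorem of_const_mul_self {c : ℝ} (hc : (Fintype.card ι : ℝ) * c = 1) :
    of (fun _ _ : ι => c) * of (fun _ _ => c) = of fun _ _ => c := by
  rw [mul_of_const_of_sum_row_eq_one]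
  intro i
  simpa [Finset.sum_const, Finset.card_univ] using hc

theorem trace_of_const {c : ℝ} (hc : (Fintype.card ι : ℝ) * c = 1) :
    (of fun _ _ : ι => c).trace = 1 := by
  simpa [trace, Finset.sum_const, Finset.card_univ] using hc

variable [DecidableEq ι]

theorem PosSemidef.sub_of_const {X : Matrix ι ι ℝ} (hX : X.PosSemidef)
    (hrow : ∀ i, ∑ j, X i j = 1) {c : ℝ} (hc : (Fintype.card ι : ℝ) * c = 1) :
    (X - of fun _ _ => c).PosSemidef := by
  set J : Matrix ι ι ℝ := of fun _ _ => c
  have hcol : ∀ j, ∑ i, X i j = 1 := fun j => by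
    simpa only [← hX.isHermitian.apply j, star_trivial] using hrow j
  have hJ : Jᴴ = J := by ext; rfl
  have hsandwich : (1 - J)ᴴ * X * (1 - J) = X - J := by
    rw [conjTranspose_sub, conjTranspose_one, hJ, sub_mul, one_mul,
      of_const_mul_of_sum_col_eq_one hcol, mul_sub, mul_one, sub_mul,
      mul_of_const_of_sum_row_eq_one hrow, of_const_mul_self hc]
    abel
  exact hsandwich ▸ hX.conjTranspose_mul_mul_same (1 - J)

end ConstMatrix

open scoped RealInnerProductSpace in
theorem dotProduct_mulVec_le_opNorm_mul {n : ℕ} (A : Matrix (Fin n) (Fin n) ℝ) (v : Fin n → ℝ) :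
    v ⬝ᵥ A *ᵥ v ≤ opNorm A * (v ⬝ᵥ v) := by
  set T := toEuclideanCLM (n := Fin n) (𝕜 := ℝ) A
  set w : EuclideanSpace ℝ (Fin n) := WithLp.toLp 2 v
  have hnorm : v ⬝ᵥ v = ‖w‖ ^ 2 := by
    rw [← real_inner_self_eq_norm_sq, EuclideanSpace.inner_toLp_toLp, star_trivial]
  calc v ⬝ᵥ A *ᵥ v = ⟪w, T w⟫ := (inner_toEuclideanCLM A w w).symm
    _ ≤ ‖w‖ * ‖T w‖ := real_inner_le_norm _ _
    _ ≤ ‖w‖ * (‖T‖ * ‖w‖) := by gcongr; exact T.le_opNorm w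
    _ = opNorm A * (v ⬝ᵥ v) := by rw [hnorm, opNorm]; ring

theorem PosSemidef.trace_mul_le_opNorm_mul_trace {n : ℕ} {S : Matrix (Fin n) (Fin n) ℝ}
    (hS : S.PosSemidef) (A : Matrix (Fin n) (Fin n) ℝ) :
    (A * S).trace ≤ opNorm A * S.trace := by
  obtain ⟨B, rfl⟩ : ∃ B : Matrix (Fin n) (Fin n) ℝ, S = Bᴴ * B := by
    open scoped MatrixOrder in exact CStarAlgebra.nonneg_iff_eq_star_mul_self.mp hS.nonneg
  have hAS : (A * (Bᴴ * B)).trace = ∑ i, B i ⬝ᵥ A *ᵥ B i := by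
    rw [← mul_assoc, trace_mul_comm, trace]
    refine Finset.sum_congr rfl fun i _ => ?_
    simp only [diag_apply, mul_apply, conjTranspose_apply, dotProduct, mulVec, star_trivial,
      Finset.mul_sum]
  have hS : (Bᴴ * B).trace = ∑ i, B i ⬝ᵥ B i := by
    simp only [trace, diag_apply, mul_apply, conjTranspose_apply, dotProduct, star_trivial]
    exact Finset.sum_comm
  rw [hAS, hS, Finset.mul_sum]
  exact Finset.sum_le_sum fun i _ => dotProduct_mulVec_le_opNorm_mul A (B i)

end Matrix

theorem sdp_lambda_degenerate (n : ℕ) (hn : 1 ≤ n)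
    (A : Matrix (Fin n) (Fin n) ℝ)
    (lam : ℝ) (hlam : opNorm A ≤ lam) :
    ∀ X : Matrix (Fin n) (Fin n) ℝ, X.PosSemidef → (∀ i j, 0 ≤ X i j) →
      (∀ i, ∑ j, X i j = 1) →
      (A * X).trace - lam * X.trace
        ≤ (A * Matrix.of (fun _ _ : Fin n => (1 : ℝ) / n)).trace - lam := by
  intro X hX _ hrow
  set J : Matrix (Fin n) (Fin n) ℝ := of fun _ _ => (1 : ℝ) / n
  have hc : (Fintype.card (Fin n) : ℝ) * (1 / n) = 1 := by
    rw [Fintype.card_fin]; field_simp [Nat.cast_ne_zero.mpr (by omega : n ≠ 0)]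
  have hXJ : (X - J).PosSemidef := hX.sub_of_const hrow hc
  have hbound : (A * (X - J)).trace ≤ lam * (X - J).trace :=
    (hXJ.trace_mul_le_opNorm_mul_trace A).trans
      (mul_le_mul_of_nonneg_right hlam hXJ.trace_nonneg)
  rw [mul_sub, trace_sub, trace_sub, trace_of_const hc] at hbound
  linarith
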